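/- Let Π be a proper plane in P and k₁, k₂, k₃ the sides of a proper triangle contained in Π. Then for every point a ∈ Π (proper or improper), there is a proper line through a that intersects two of the sides k₁, k₂, k₃ in two distinct proper points. In particular, proper planes are definable in terms of the complement of W in P. -/

import Mathlib

/-- A projective space of dimension at least 3, given by its point set `S` and its
set of lines: any two points lie on a unique line, the Veblen (Pasch) axiom holds,
and there exist two disjoint lines (dimension ≥ 3). -/
structure ProjSpace (S : Type*) where
  L : Set (Set S)
  two_points : ∀ k ∈ L, ∃ a ∈ k, ∃ b ∈ k, a ≠ b
  unique_meet : ∀ k ∈ L, ∀ l ∈ L, k ≠ l → (k ∩ l).Subsingleton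
  join : ∀ a b : S, a ≠ b → ∃ k ∈ L, a ∈ k ∧ b ∈ k
  veblen : ∀ l₁ ∈ L, ∀ l₂ ∈ L, ∀ l₃ ∈ L, ∀ l₄ ∈ L, ∀ p a b c d : S,
    l₁ ≠ l₂ → p ≠ a → p ≠ b → p ≠ c → p ≠ d →
    p ∈ l₁ → a ∈ l₁ → c ∈ l₁ → p ∈ l₂ → b ∈ l₂ → d ∈ l₂ →
    a ∈ l₃ → b ∈ l₃ → c ∈ l₄ → d ∈ l₄ → (l₃ ∩ l₄).Nonempty
  dim3 : ∃ k ∈ L, ∃ l ∈ L, k ∩ l = ∅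

namespace ProjSpace

variable {S : Type*}

/-- A subspace: any line through two of its points is contained in it. -/
def IsSubspace (P : ProjSpace S) (X : Set S) : Prop :=
  ∀ k ∈ P.L, ∀ a ∈ k, ∀ b ∈ k, a ≠ b → a ∈ X → b ∈ X → k ⊆ X

/-- The subspace spanned by a point set. -/
def span (P : ProjSpace S) (X : Set S) : Set S :=
  ⋂₀ {Y | P.IsSubspace Y ∧ X ⊆ Y}

/-- A plane: the span of a line together with a point outside it. -/
def IsPlane (P : ProjSpace S) (Pl : Set S) : Prop :=
  ∃ k ∈ P.L, ∃ a, a ∉ k ∧ Pl = P.span (insert a k)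

/-- `HasIndex P W lam`: some line has exactly `lam` points in `W` and every line not
contained in `W` has at most `lam` points in `W`. -/
def HasIndex (P : ProjSpace S) (W : Set S) (lam : ℕ) : Prop :=
  (∃ k ∈ P.L, (k ∩ W).encard = (lam : ℕ∞)) ∧
    ∀ k ∈ P.L, ¬ k ⊆ W → (k ∩ W).encard ≤ (lam : ℕ∞)

/-- Three lines form a triangle: pairwise distinct, pairwise intersecting,
not concurrent. -/
def LineTriangle (P : ProjSpace S) (k₁ k₂ k₃ : Set S) : Prop :=
  k₁ ∈ P.L ∧ k₂ ∈ P.L ∧ k₃ ∈ P.L ∧ k₁ ≠ k₂ ∧ k₁ ≠ k₃ ∧ k₂ ≠ k₃ ∧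
    (k₁ ∩ k₂).Nonempty ∧ (k₁ ∩ k₃).Nonempty ∧ (k₂ ∩ k₃).Nonempty ∧
    ¬ (k₁ ∩ k₂ ∩ k₃).Nonempty

/-- Parallelism w.r.t. the horizon `W`: the lines meet, and only inside `W`. -/
def Par (W : Set S) (k₁ k₂ : Set S) : Prop :=
  (k₁ ∩ k₂).Nonempty ∧ k₁ ∩ k₂ ⊆ W

end ProjSpace

/-!
Any two lines of a plane meet: the plane spanned by a line `k` and a point `b ∉ k` lies in the
cone of lines joining `b` to `k`, Veblen's axiom makes this cone a subspace, and any two lines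
inside it meet. If `a` lies on a side, that side and its two (proper) vertices do the job.
Otherwise project `k₁` from `a` onto `k₂`. This is injective, and `k₁` has at least `λ + 1`
proper points off `k₂` (it has `≥ 2λ + 2` points, `≤ λ` of them in `W`), while `k₂` has at
most `λ` points in `W`; so some proper point of `k₁` is sent to a proper point of `k₂`.
-/

namespace ProjSpace

variable {S : Type*} (P : ProjSpace S)

theorem eq_of_mem_of_mem {l m : Set S} (hl : l ∈ P.L) (hm : m ∈ P.L) {x y : S} (hxy : x ≠ y)
    (hxl : x ∈ l) (hyl : y ∈ l) (hxm : x ∈ m) (hym : y ∈ m) : l = m := by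
  by_contra h
  exact hxy (P.unique_meet l hl m hm h ⟨hxl, hxm⟩ ⟨hyl, hym⟩)

theorem exists_mem_not_mem {l m : Set S} (hl : l ∈ P.L) (hm : m ∈ P.L) (hlm : l ≠ m) :
    ∃ y ∈ l, y ∉ m := by
  obtain ⟨u, hu, v, hv, huv⟩ := P.two_points l hl
  by_contra! h
  exact huv (P.unique_meet l hl m hm hlm ⟨hu, h u hu⟩ ⟨hv, h v hv⟩)

theorem encard_inter_le_one {l m : Set S} (hl : l ∈ P.L) (hm : m ∈ P.L) (hlm : l ≠ m) :
    (l ∩ m).encard ≤ 1 :=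
  Set.encard_le_one_iff.mpr fun _ _ hx hy => P.unique_meet l hl m hm hlm hx hy

theorem span_isSubspace (X : Set S) : P.IsSubspace (P.span X) :=
  fun k hk a ha b hb hab haX hbX _ hz Y hY => hY.1 k hk a ha b hb hab (haX Y hY) (hbX Y hY) hz

theorem span_subset {X Y : Set S} (hY : P.IsSubspace Y) (hXY : X ⊆ Y) : P.span X ⊆ Y :=
  Set.sInter_subset_of_mem ⟨hY, hXY⟩

def cone (b : S) (k : Set S) : Set S :=
  {y | y = b ∨ ∃ n ∈ P.L, b ∈ n ∧ y ∈ n ∧ (n ∩ k).Nonempty}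

variable {P}

theorem IsPlane.isSubspace {Pl : Set S} (hPl : P.IsPlane Pl) : P.IsSubspace Pl := by
  obtain ⟨k, -, b, -, rfl⟩ := hPl
  exact P.span_isSubspace _

variable {b : S} {k : Set S}

theorem mem_cone_of_mem_line {n : Set S} (hn : n ∈ P.L) (hbn : b ∈ n) (hnk : (n ∩ k).Nonempty)
    {z : S} (hz : z ∈ n) : z ∈ P.cone b k :=
  Or.inr ⟨n, hn, hbn, hz, hnk⟩

theorem inter_nonempty_of_mem_cone {n : Set S} (hn : n ∈ P.L) (hbn : b ∈ n) {y : S}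
    (hyn : y ∈ n) (hyb : y ≠ b) (hy : y ∈ P.cone b k) : (n ∩ k).Nonempty := by
  obtain ⟨n', hn', hbn', hyn', hn'k⟩ := hy.resolve_left hyb
  rwa [P.eq_of_mem_of_mem hn hn' hyb hyn hbn hyn' hbn']

theorem subset_cone (hbk : b ∉ k) : insert b k ⊆ P.cone b k := by
  rintro y (rfl | hy)
  · exact Or.inl rfl
  · obtain ⟨n, hn, hbn, hyn⟩ := P.join b y (ne_of_mem_of_not_mem hy hbk).symm
    exact mem_cone_of_mem_line hn hbn ⟨y, hyn, hy⟩ hyn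

theorem inter_nonempty_of_apex_mem {n : Set S} (hn : n ∈ P.L) (hbn : b ∈ n)
    (hnc : n ⊆ P.cone b k) : (n ∩ k).Nonempty := by
  obtain ⟨u, hu, v, hv, huv⟩ := P.two_points n hn
  rcases eq_or_ne u b with rfl | hub
  · exact inter_nonempty_of_mem_cone hn hbn hv huv.symm (hnc hv)
  · exact inter_nonempty_of_mem_cone hn hbn hu hub (hnc hu)

theorem inter_nonempty_of_apex_not_mem (hk : k ∈ P.L) (hbk : b ∉ k) {m : Set S} (hm : m ∈ P.L)
    (hbm : b ∉ m) {y₁ y₂ : S} (h12 : y₁ ≠ y₂) (hy₁ : y₁ ∈ m) (hy₂ : y₂ ∈ m)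
    (hc₁ : y₁ ∈ P.cone b k) (hc₂ : y₂ ∈ P.cone b k) : (m ∩ k).Nonempty := by
  obtain ⟨m₁, hm₁, hbm₁, hy₁m₁, x₁, hx₁⟩ := hc₁.resolve_left (ne_of_mem_of_not_mem hy₁ hbm)
  obtain ⟨m₂, hm₂, hbm₂, hy₂m₂, x₂, hx₂⟩ := hc₂.resolve_left (ne_of_mem_of_not_mem hy₂ hbm)
  have hne : m₁ ≠ m₂ := by
    rintro rfl
    exact hbm (P.eq_of_mem_of_mem hm₁ hm h12 hy₁m₁ hy₂m₂ hy₁ hy₂ ▸ hbm₁)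
  exact P.veblen m₁ hm₁ m₂ hm₂ m hm k hk b y₁ y₂ x₁ x₂ hne
    (ne_of_mem_of_not_mem hy₁ hbm).symm (ne_of_mem_of_not_mem hy₂ hbm).symm
    (ne_of_mem_of_not_mem hx₁.2 hbk).symm (ne_of_mem_of_not_mem hx₂.2 hbk).symm
    hbm₁ hy₁m₁ hx₁.1 hbm₂ hy₂m₂ hx₂.1 hy₁ hy₂ hx₁.2 hx₂.2

theorem cone_isSubspace (hk : k ∈ P.L) (hbk : b ∉ k) : P.IsSubspace (P.cone b k) := by
  intro m hm y₁ hy₁ y₂ hy₂ h12 hc₁ hc₂ z hz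
  by_cases hbm : b ∈ m
  · obtain ⟨y, hym, hyc, hyb⟩ : ∃ y ∈ m, y ∈ P.cone b k ∧ y ≠ b := by
      rcases eq_or_ne y₁ b with rfl | hy₁b
      · exact ⟨y₂, hy₂, hc₂, h12.symm⟩
      · exact ⟨y₁, hy₁, hc₁, hy₁b⟩
    exact mem_cone_of_mem_line hm hbm (inter_nonempty_of_mem_cone hm hbm hym hyb hyc) hz
  rcases eq_or_ne z b with rfl | hzb
  · exact Or.inl rfl
  by_cases hzk : z ∈ k
  · exact subset_cone hbk (Or.inr hzk)
  rcases eq_or_ne z y₁ with rfl | hzy₁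
  · exact hc₁
  rcases eq_or_ne z y₂ with rfl | hzy₂
  · exact hc₂
  have hmk : m ≠ k := fun h => hzk (h ▸ hz)
  obtain ⟨y, hym, hyc, hyz, hyk⟩ : ∃ y ∈ m, y ∈ P.cone b k ∧ y ≠ z ∧ y ∉ k := by
    by_cases hy₁k : y₁ ∈ k
    · exact ⟨y₂, hy₂, hc₂, hzy₂.symm,
        fun hy₂k => h12 (P.unique_meet m hm k hk hmk ⟨hy₁, hy₁k⟩ ⟨hy₂, hy₂k⟩)⟩
    · exact ⟨y₁, hy₁, hc₁, hzy₁.symm, hy₁k⟩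
  obtain ⟨x₀, hx₀m, hx₀k⟩ := inter_nonempty_of_apex_not_mem hk hbk hm hbm h12 hy₁ hy₂ hc₁ hc₂
  obtain ⟨n₁, hn₁, hbn₁, hyn₁, x₁, hx₁n₁, hx₁k⟩ :=
    hyc.resolve_left (ne_of_mem_of_not_mem hym hbm)
  obtain ⟨n, hn, hbn, hzn⟩ := P.join b z hzb.symm
  -- Veblen for the lines `n₁ = yb` and `m = yz`, cut by `n = bz` and by `k`
  refine mem_cone_of_mem_line hn hbn ?_ hzn
  exact P.veblen n₁ hn₁ m hm n hn k hk y b z x₁ x₀ (fun h => hbm (h ▸ hbn₁))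
    (ne_of_mem_of_not_mem hym hbm) hyz (ne_of_mem_of_not_mem hx₁k hyk).symm
    (ne_of_mem_of_not_mem hx₀k hyk).symm hyn₁ hbn₁ hx₁n₁ hym hz hx₀m hbn hzn hx₁k hx₀k

theorem apex_line_inter_nonempty (hk : k ∈ P.L) (hbk : b ∉ k) {l m : Set S} (hl : l ∈ P.L)
    (hbl : b ∈ l) (hlc : l ⊆ P.cone b k) (hm : m ∈ P.L) (hbm : b ∉ m) (hmc : m ⊆ P.cone b k) :
    (l ∩ m).Nonempty := by
  obtain ⟨xl, hxll, hxlk⟩ := inter_nonempty_of_apex_mem hl hbl hlc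
  by_cases hmk : m = k
  · exact ⟨xl, hxll, hmk ▸ hxlk⟩
  obtain ⟨u, hu, v, hv, huv⟩ := P.two_points m hm
  obtain ⟨xm, hxmm, hxmk⟩ :=
    inter_nonempty_of_apex_not_mem hk hbk hm hbm huv hu hv (hmc hu) (hmc hv)
  obtain ⟨y, hym, hyk⟩ := P.exists_mem_not_mem hm hk hmk
  obtain ⟨n, hn, hbn, hyn, x, hxn, hxk⟩ := (hmc hym).resolve_left (ne_of_mem_of_not_mem hym hbm)
  rcases eq_or_ne x xl with rfl | hxxl
  · rw [← P.eq_of_mem_of_mem hn hl (ne_of_mem_of_not_mem hxk hbk).symm hbn hxn hbl hxll]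
    exact ⟨y, hyn, hym⟩
  have hxxm : x ≠ xm := by
    rintro rfl
    exact hbm (P.eq_of_mem_of_mem hn hm (ne_of_mem_of_not_mem hxk hyk).symm hyn hxn hym hxmm ▸ hbn)
  rw [Set.inter_comm]
  exact P.veblen n hn k hk m hm l hl x y xm b xl (fun h => hbk (h ▸ hbn))
    (ne_of_mem_of_not_mem hxk hyk) hxxm (ne_of_mem_of_not_mem hxk hbk) hxxl
    hxn hyn hbn hxk hxmk hxlk hym hxmm hbl hxll

theorem inter_nonempty_of_subset_cone (hk : k ∈ P.L) (hbk : b ∉ k) {l m : Set S} (hl : l ∈ P.L)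
    (hm : m ∈ P.L) (hlc : l ⊆ P.cone b k) (hmc : m ⊆ P.cone b k) : (l ∩ m).Nonempty := by
  by_cases hbl : b ∈ l
  · by_cases hbm : b ∈ m
    · exact ⟨b, hbl, hbm⟩
    · exact apex_line_inter_nonempty hk hbk hl hbl hlc hm hbm hmc
  by_cases hbm : b ∈ m
  · rw [Set.inter_comm]
    exact apex_line_inter_nonempty hk hbk hm hbm hmc hl hbl hlc
  obtain ⟨u, hu, v, hv, huv⟩ := P.two_points l hl
  obtain ⟨xl, hxll, hxlk⟩ :=
    inter_nonempty_of_apex_not_mem hk hbk hl hbl huv hu hv (hlc hu) (hlc hv)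
  obtain ⟨u', hu', v', hv', huv'⟩ := P.two_points m hm
  obtain ⟨xm, hxmm, hxmk⟩ :=
    inter_nonempty_of_apex_not_mem hk hbk hm hbm huv' hu' hv' (hmc hu') (hmc hv')
  rcases eq_or_ne xl xm with rfl | hx
  · exact ⟨xl, hxll, hxmm⟩
  -- Veblen for the lines `n₁ = b xl` and `n₂ = b xm`, cut by `l` and by `m`
  obtain ⟨n₁, hn₁, hbn₁, hxln₁⟩ := P.join b xl (ne_of_mem_of_not_mem hxlk hbk).symm
  obtain ⟨n₂, hn₂, hbn₂, hxmn₂⟩ := P.join b xm (ne_of_mem_of_not_mem hxmk hbk).symm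
  have hn₁₂ : n₁ ≠ n₂ := by
    rintro rfl
    exact hbk (P.eq_of_mem_of_mem hn₁ hk hx hxln₁ hxmn₂ hxlk hxmk ▸ hbn₁)
  obtain ⟨w, hwn₁, hwm⟩ := apex_line_inter_nonempty hk hbk hn₁ hbn₁
    (fun _ => mem_cone_of_mem_line hn₁ hbn₁ ⟨xl, hxln₁, hxlk⟩) hm hbm hmc
  obtain ⟨u, hun₂, hul⟩ := apex_line_inter_nonempty hk hbk hn₂ hbn₂
    (fun _ => mem_cone_of_mem_line hn₂ hbn₂ ⟨xm, hxmn₂, hxmk⟩) hl hbl hlc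
  exact P.veblen n₁ hn₁ n₂ hn₂ l hl m hm b xl u w xm hn₁₂
    (ne_of_mem_of_not_mem hxlk hbk).symm (ne_of_mem_of_not_mem hul hbl).symm
    (ne_of_mem_of_not_mem hwm hbm).symm (ne_of_mem_of_not_mem hxmk hbk).symm
    hbn₁ hxln₁ hwn₁ hbn₂ hun₂ hxmn₂ hxll hul hwm hxmm

theorem IsPlane.inter_nonempty {Pl : Set S} (hPl : P.IsPlane Pl) {l m : Set S} (hl : l ∈ P.L)
    (hm : m ∈ P.L) (hlPl : l ⊆ Pl) (hmPl : m ⊆ Pl) : (l ∩ m).Nonempty := by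
  obtain ⟨k, hk, b, hbk, rfl⟩ := hPl
  have hcone := P.span_subset (cone_isSubspace hk hbk) (subset_cone hbk)
  exact inter_nonempty_of_subset_cone hk hbk hl hm (hlPl.trans hcone) (hmPl.trans hcone)

theorem exists_line_through_two_points_off (W : Set S) {Pl : Set S} (hPl : P.IsPlane Pl)
    {k₁ k₂ : Set S} (hk₁ : k₁ ∈ P.L) (hk₂ : k₂ ∈ P.L) (h12 : k₁ ≠ k₂) (hsub₁ : k₁ ⊆ Pl)
    (hsub₂ : k₂ ⊆ Pl) {a : S} (ha : a ∈ Pl) (ha₁ : a ∉ k₁) (ha₂ : a ∉ k₂) {lam : ℕ}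
    (hW₁ : (k₁ ∩ W).encard ≤ lam) (hW₂ : (k₂ ∩ W).encard ≤ lam)
    (hsize : 2 * (lam : ℕ∞) + 2 ≤ k₁.encard) :
    ∃ l ∈ P.L, a ∈ l ∧ ∃ p ∈ k₁, ∃ q ∈ k₂, p ≠ q ∧ p ∉ W ∧ q ∉ W ∧ p ∈ l ∧ q ∈ l := by
  set C := k₁ \ (W ∪ k₂)
  have hproj : ∀ x, ∃ q, x ∈ C → q ∈ k₂ ∧ ∃ l ∈ P.L, a ∈ l ∧ x ∈ l ∧ q ∈ l := by
    intro x
    by_cases hx : x ∈ C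
    · have hax : a ≠ x := (ne_of_mem_of_not_mem hx.1 ha₁).symm
      obtain ⟨l, hl, hal, hxl⟩ := P.join a x hax
      have hlPl : l ⊆ Pl := hPl.isSubspace l hl a hal x hxl hax ha (hsub₁ hx.1)
      obtain ⟨q, hql, hqk₂⟩ := hPl.inter_nonempty hl hk₂ hlPl hsub₂
      exact ⟨q, fun _ => ⟨hqk₂, l, hl, hal, hxl, hql⟩⟩
    · exact ⟨a, fun h => absurd h hx⟩
  choose f hf using hproj
  by_cases hgood : ∃ x ∈ C, f x ∉ W
  · obtain ⟨x, hx, hfx⟩ := hgood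
    obtain ⟨hfk₂, l, hl, hal, hxl, hfl⟩ := hf x hx
    have hxk₂ : x ∉ k₂ := fun h => hx.2 (Or.inr h)
    exact ⟨l, hl, hal, x, hx.1, f x, hfk₂, (ne_of_mem_of_not_mem hfk₂ hxk₂).symm,
      fun h => hx.2 (Or.inl h), hfx, hxl, hfl⟩
  push Not at hgood
  exfalso
  have hinj : Set.InjOn f C := by
    intro x hx y hy hxy
    obtain ⟨hfk₂, lx, hlx, halx, hxlx, hflx⟩ := hf x hx
    obtain ⟨-, ly, hly, haly, hyly, hfly⟩ := hf y hy
    have hlxy : lx = ly :=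
      P.eq_of_mem_of_mem hlx hly (ne_of_mem_of_not_mem hfk₂ ha₂).symm halx hflx haly (hxy ▸ hfly)
    have hlxk₁ : lx ≠ k₁ := fun h => ha₁ (h ▸ halx)
    exact P.unique_meet lx hlx k₁ hk₁ hlxk₁ ⟨hxlx, hx.1⟩ ⟨hlxy ▸ hyly, hy.1⟩
  have hmaps : Set.MapsTo f C (k₂ ∩ W) := fun x hx => ⟨(hf x hx).1, hgood x hx⟩
  have hC : C.encard ≤ lam := (Set.encard_le_encard_of_injOn hmaps hinj).trans hW₂
  have hcover : k₁ ⊆ C ∪ ((k₁ ∩ W) ∪ (k₁ ∩ k₂)) := by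
    intro y hy
    simp only [C, Set.mem_union, Set.mem_sdiff, Set.mem_inter_iff]
    tauto
  have hcount : 2 * (lam : ℕ∞) + 2 ≤ lam + (lam + 1) :=
    calc 2 * (lam : ℕ∞) + 2 ≤ k₁.encard := hsize
      _ ≤ C.encard + ((k₁ ∩ W).encard + (k₁ ∩ k₂).encard) :=
        (Set.encard_mono hcover).trans
          ((Set.encard_union_le _ _).trans (add_le_add le_rfl (Set.encard_union_le _ _)))
      _ ≤ lam + (lam + 1) := add_le_add hC (add_le_add hW₁ (P.encard_inter_le_one hk₁ hk₂ h12))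
  norm_cast at hcount
  omega

end ProjSpace

open ProjSpace in
theorem triangle_spans_plane_general {S : Type*} (P : ProjSpace S) (W : Set S)
    (lam : ℕ) (hind : P.HasIndex W lam)
    (hsize : ∀ k ∈ P.L, 2 * (lam : ℕ∞) + 2 ≤ k.encard)
    (Pl : Set S) (hPl : P.IsPlane Pl)
    (k₁ k₂ k₃ : Set S) (htri : LineTriangle P k₁ k₂ k₃)
    (hsub₁ : k₁ ⊆ Pl) (hsub₂ : k₂ ⊆ Pl)
    (hp₁ : ¬ k₁ ⊆ W) (hp₂ : ¬ k₂ ⊆ W) (hp₃ : ¬ k₃ ⊆ W)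
    (hv₁₂ : ∀ x ∈ k₁ ∩ k₂, x ∉ W) (hv₁₃ : ∀ x ∈ k₁ ∩ k₃, x ∉ W)
    (hv₂₃ : ∀ x ∈ k₂ ∩ k₃, x ∉ W) :
    ∀ a ∈ Pl, ∃ l ∈ P.L, ¬ l ⊆ W ∧ a ∈ l ∧
      ∃ p q : S, p ≠ q ∧ p ∉ W ∧ q ∉ W ∧ p ∈ l ∧ q ∈ l ∧
        ((p ∈ k₁ ∧ q ∈ k₂) ∨ (p ∈ k₁ ∧ q ∈ k₃) ∨ (p ∈ k₂ ∧ q ∈ k₃)) := by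
  obtain ⟨hL₁, hL₂, hL₃, h12, -, -, ⟨v₁₂, hv12⟩, ⟨v₁₃, hv13⟩, ⟨v₂₃, hv23⟩, hconc⟩ := htri
  have d12_13 : v₁₂ ≠ v₁₃ := by rintro rfl; exact hconc ⟨v₁₂, hv12, hv13.2⟩
  have d12_23 : v₁₂ ≠ v₂₃ := by rintro rfl; exact hconc ⟨v₁₂, hv12, hv23.2⟩
  have d13_23 : v₁₃ ≠ v₂₃ := by rintro rfl; exact hconc ⟨v₁₃, ⟨hv13.1, hv23.1⟩, hv13.2⟩
  intro a ha
  by_cases ha₁ : a ∈ k₁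
  · exact ⟨k₁, hL₁, hp₁, ha₁, v₁₂, v₁₃, d12_13, hv₁₂ _ hv12, hv₁₃ _ hv13, hv12.1, hv13.1,
      Or.inr (Or.inl ⟨hv12.1, hv13.2⟩)⟩
  by_cases ha₂ : a ∈ k₂
  · exact ⟨k₂, hL₂, hp₂, ha₂, v₁₂, v₂₃, d12_23, hv₁₂ _ hv12, hv₂₃ _ hv23, hv12.2, hv23.1,
      Or.inr (Or.inl ⟨hv12.1, hv23.2⟩)⟩
  by_cases ha₃ : a ∈ k₃
  · exact ⟨k₃, hL₃, hp₃, ha₃, v₁₃, v₂₃, d13_23, hv₁₃ _ hv13, hv₂₃ _ hv23, hv13.2, hv23.2,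
      Or.inl ⟨hv13.1, hv23.1⟩⟩
  obtain ⟨l, hl, hal, p, hp, q, hq, hpq, hpW, hqW, hpl, hql⟩ :=
    P.exists_line_through_two_points_off W hPl hL₁ hL₂ h12 hsub₁ hsub₂ ha ha₁ ha₂
      (hind.2 k₁ hL₁ hp₁) (hind.2 k₂ hL₂ hp₂) (hsize k₁ hL₁)
  exact ⟨l, hl, fun h => hpW (h hpl), hal, p, q, hpq, hpW, hqW, hpl, hql, Or.inl ⟨hp, hq⟩⟩

open ProjSpace in
/-- if `k₁, k₂, k₃` are the sides of a proper triangle on a proper plane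
`Pl`, then through every point `a ∈ Pl` there is a proper line intersecting two of the
sides in two distinct proper points. -/
theorem triangle_spans_plane {S : Type*} (P : ProjSpace S) (W : Set S)
    (lam : ℕ) (hlam : 0 < lam) (hind : P.HasIndex W lam)
    (hsize : ∀ k ∈ P.L, 2 * (lam : ℕ∞) + 2 ≤ k.encard)
    (Pl : Set S) (hPl : P.IsPlane Pl) (hPlprop : ¬ Pl ⊆ W)
    (k₁ k₂ k₃ : Set S) (htri : LineTriangle P k₁ k₂ k₃)
    (hsub₁ : k₁ ⊆ Pl) (hsub₂ : k₂ ⊆ Pl) (hsub₃ : k₃ ⊆ Pl)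
    (hp₁ : ¬ k₁ ⊆ W) (hp₂ : ¬ k₂ ⊆ W) (hp₃ : ¬ k₃ ⊆ W)
    (hv₁₂ : ∀ x ∈ k₁ ∩ k₂, x ∉ W) (hv₁₃ : ∀ x ∈ k₁ ∩ k₃, x ∉ W)
    (hv₂₃ : ∀ x ∈ k₂ ∩ k₃, x ∉ W) :
    ∀ a ∈ Pl, ∃ l ∈ P.L, ¬ l ⊆ W ∧ a ∈ l ∧
      ∃ p q : S, p ≠ q ∧ p ∉ W ∧ q ∉ W ∧ p ∈ l ∧ q ∈ l ∧
        ((p ∈ k₁ ∧ q ∈ k₂) ∨ (p ∈ k₁ ∧ q ∈ k₃) ∨ (p ∈ k₂ ∧ q ∈ k₃)) :=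
  triangle_spans_plane_general P W lam hind hsize Pl hPl k₁ k₂ k₃ htri hsub₁ hsub₂ hp₁ hp₂ hp₃ hv₁₂
    hv₁₃ hv₂₃
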